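/- For every ζ = (ν,σ,η,ξ) ∈ ℝ⁴ satisfying the nonlinear drift condition b^C(ζ) = 0 and ξ ≥ 0, one has the lower bound H₁(ζ) ≥ −(ψ/2)·v^⊤ζ̃ − ½·|λ|·‖M‖_F·‖ζ − ζ⁰(Σ)‖². -/

import Mathlib

open Finset

noncomputable section

namespace Stmt13

/-- The Euclidean norm of a vector in `ℝ^m`. -/
def enorm {m : ℕ} (z : Fin m → ℝ) : ℝ := Real.sqrt (∑ i, z i ^ 2)

/-- The reference control `ζ⁰(Σ) = (0, Σ, 0, 0)`. -/
def zeta0 (Sig : ℝ) : Fin 4 → ℝ := ![0, Sig, 0, 0]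

/-- The fourth standard basis vector `e₄` of `ℝ⁴`. -/
def e4 : Fin 4 → ℝ := fun i => if i = 3 then 1 else 0

/-- `c^⊤ Ψ v` for the diagonal matrix `Ψ = diag psi`. -/
def cPv (psi c v : Fin 4 → ℝ) : ℝ := ∑ i, c i * psi i * v i

/-- `c^⊤ Ψ c` for the diagonal matrix `Ψ = diag psi`. -/
def cPc (psi c : Fin 4 → ℝ) : ℝ := ∑ i, c i * psi i * c i

/-- The Lagrange multiplier `λ`. -/
def lam (psi c v : Fin 4 → ℝ) : ℝ :=
  if 0 ≤ v 3 - cPv psi c v / cPc psi c * c 3 then cPv psi c v / cPc psi c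
  else (cPv psi c v - c 3 * v 3 * psi 3) / (cPc psi c - c 3 ^ 2 * psi 3)

/-- The Lagrange multiplier `μ = max (-(v₄ - λ c₄)) 0`. -/
def mu (psi c v : Fin 4 → ℝ) : ℝ := max (-(v 3 - lam psi c v * c 3)) 0

/-- `ζ̃ = Ψ (v - λ c + μ e₄)`. -/
def zetaTilde (psi c v : Fin 4 → ℝ) : Fin 4 → ℝ := fun i =>
  psi i * (v i - lam psi c v * c i + mu psi c v * e4 i)

/-- `H₁(ζ) = (1/(2ψ)) (ζ - ζ⁰(Σ))^⊤ Ψ⁻¹ (ζ - ζ⁰(Σ)) - v^⊤ (ζ - ζ⁰(Σ))`. -/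
def H1 (Sig ψ : ℝ) (psi v : Fin 4 → ℝ) (z : Fin 4 → ℝ) : ℝ :=
  (1 / (2 * ψ)) * ∑ i, (z i - zeta0 Sig i) ^ 2 / psi i -
    ∑ i, v i * (z i - zeta0 Sig i)

/-- The drift function
`b^C(ζ) = ν c₁ + (c₂/(2Σ))(σ² - Σ²) + (c₃/Σ) σ η + (η² + ξ) c₄` for `ζ = (ν,σ,η,ξ)`. -/
def bC (Sig : ℝ) (c z : Fin 4 → ℝ) : ℝ :=
  z 0 * c 0 + c 1 / (2 * Sig) * (z 1 ^ 2 - Sig ^ 2) + c 2 / Sig * (z 1 * z 2) +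
    (z 2 ^ 2 + z 3) * c 3

/-- The Frobenius norm of the symmetric 2×2 matrix `M` with entries
`M₁₁ = c₂/Σ`, `M₁₂ = M₂₁ = c₃/Σ`, `M₂₂ = 2 c₄`. -/
def frobM (Sig : ℝ) (c : Fin 4 → ℝ) : ℝ :=
  Real.sqrt ((c 1 / Sig) ^ 2 + (c 2 / Sig) ^ 2 + (c 2 / Sig) ^ 2 + (2 * c 3) ^ 2)

/-!
Put `w = v - λ c + μ e₄`, so that `ζ̃ = Ψ w`, and `δ = ζ - ζ⁰(Σ)`. The multipliers are the KKT
multipliers of `c ⬝ ζ = 0`, `ζ₄ ≥ 0`: `c ⬝ ζ̃ = 0` and `μ ζ̃₄ = 0`, hence `v ⬝ ζ̃ = wᵀ Ψ w`.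
Completing the square in each coordinate gives `δᵀ Ψ⁻¹ δ / (2ψ) - w ⬝ δ ≥ -(ψ/2) wᵀ Ψ w`, and
`H₁(ζ)` exceeds this by `-λ c ⬝ δ + μ ξ`. Here `μ ξ ≥ 0`, and on the drift constraint
`c ⬝ δ = -½ qᵀ M q` with `q = (σ - Σ, η)`, which Cauchy–Schwarz bounds by `½ ‖M‖_F ‖δ‖²`.
-/

def lagrangeCost (psi c v : Fin 4 → ℝ) : Fin 4 → ℝ := fun i =>
  v i - lam psi c v * c i + mu psi c v * e4 i

lemma e4_eq : e4 = ![0, 0, 0, 1] := by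
  ext i
  fin_cases i <;> rfl

lemma zetaTilde_eq_mul_lagrangeCost (psi c v : Fin 4 → ℝ) (i : Fin 4) :
    zetaTilde psi c v i = psi i * lagrangeCost psi c v i := rfl

lemma enorm_sq {m : ℕ} (z : Fin m → ℝ) : enorm z ^ 2 = ∑ i, z i ^ 2 :=
  Real.sq_sqrt (by positivity)

lemma neg_mul_sq_le_sq_div_sub_mul {ψ p : ℝ} (hψ : 0 < ψ) (hp : 0 < p) (x w : ℝ) :
    -(ψ / 2) * (p * w ^ 2) ≤ 1 / (2 * ψ) * (x ^ 2 / p) - w * x := by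
  have hsq : 1 / (2 * ψ) * (x ^ 2 / p) - w * x + ψ / 2 * (p * w ^ 2)
      = (x - ψ * p * w) ^ 2 / (2 * ψ * p) := by
    field_simp
    ring
  have : 0 ≤ (x - ψ * p * w) ^ 2 / (2 * ψ * p) := by positivity
  linarith

lemma neg_mul_sum_le_sum_sq_div_sub_sum_mul {ι : Type*} [Fintype ι] {ψ : ℝ} (hψ : 0 < ψ)
    {p : ι → ℝ} (hp : ∀ i, 0 < p i) (x w : ι → ℝ) :
    -(ψ / 2) * ∑ i, p i * w i ^ 2 ≤ 1 / (2 * ψ) * ∑ i, x i ^ 2 / p i - ∑ i, w i * x i := by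
  simp only [Finset.mul_sum, ← Finset.sum_sub_distrib]
  exact Finset.sum_le_sum fun i _ => neg_mul_sq_le_sq_div_sub_mul hψ (hp i) (x i) (w i)

/- Cauchy–Schwarz for `(a, b, b, d)` and `(x², xy, xy, y²)`, the latter of norm `x² + y²`. -/
lemma abs_quadForm_le (a b d x y : ℝ) :
    |a * x ^ 2 + 2 * b * (x * y) + d * y ^ 2| ≤
      √(a ^ 2 + b ^ 2 + b ^ 2 + d ^ 2) * (x ^ 2 + y ^ 2) := by
  have hsq : (a * x ^ 2 + 2 * b * (x * y) + d * y ^ 2) ^ 2 ≤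
      (a ^ 2 + b ^ 2 + b ^ 2 + d ^ 2) * (x ^ 2 + y ^ 2) ^ 2 := by
    nlinarith [sq_nonneg (a * (x * y) - b * x ^ 2), sq_nonneg (a * y ^ 2 - d * x ^ 2),
      sq_nonneg (b * y ^ 2 - d * (x * y))]
  have := Real.sqrt_le_sqrt hsq
  rwa [Real.sqrt_sq_eq_abs, Real.sqrt_mul (by positivity), Real.sqrt_sq (by positivity)] at this

lemma neg_abs_mul_frobM_le (Sig l : ℝ) (c : Fin 4 → ℝ) (x y : ℝ) :
    -(|l| * frobM Sig c * (x ^ 2 + y ^ 2)) ≤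
      l * (c 1 / Sig * x ^ 2 + 2 * (c 2 / Sig) * (x * y) + 2 * c 3 * y ^ 2) := by
  calc -(|l| * frobM Sig c * (x ^ 2 + y ^ 2))
      ≤ -(|l| * |c 1 / Sig * x ^ 2 + 2 * (c 2 / Sig) * (x * y) + 2 * c 3 * y ^ 2|) := by
        rw [mul_assoc]
        exact neg_le_neg (mul_le_mul_of_nonneg_left (abs_quadForm_le _ _ _ x y) (abs_nonneg l))
    _ = -|l * (c 1 / Sig * x ^ 2 + 2 * (c 2 / Sig) * (x * y) + 2 * c 3 * y ^ 2)| := by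
        rw [abs_mul]
    _ ≤ _ := neg_abs_le _

lemma bC_eq_linear_add_quadratic {Sig : ℝ} (hSig : Sig ≠ 0) (c z : Fin 4 → ℝ) :
    bC Sig c z = ∑ i, c i * (z i - zeta0 Sig i) +
      1 / 2 * (c 1 / Sig * (z 1 - Sig) ^ 2 + 2 * (c 2 / Sig) * ((z 1 - Sig) * z 2) +
        2 * c 3 * z 2 ^ 2) := by
  simp only [bC, zeta0, Fin.sum_univ_four, Matrix.cons_val]
  field_simp
  ring

lemma cPc_sub_pos {psi c : Fin 4 → ℝ} (hpsi : ∀ i, 0 < psi i) (hc : c 0 ≠ 0) :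
    0 < cPc psi c - c 3 ^ 2 * psi 3 := by
  have h0 : 0 < c 0 * psi 0 * c 0 := by
    rw [mul_right_comm, ← sq]
    exact mul_pos (by positivity) (hpsi 0)
  have h1 : 0 ≤ c 1 * psi 1 * c 1 := by
    rw [mul_right_comm, ← sq]
    exact mul_nonneg (sq_nonneg _) (hpsi 1).le
  have h2 : 0 ≤ c 2 * psi 2 * c 2 := by
    rw [mul_right_comm, ← sq]
    exact mul_nonneg (sq_nonneg _) (hpsi 2).le
  simp only [cPc, Fin.sum_univ_four]
  linarith

/- The two branches in the definition of `λ`: the sign constraint `ζ̃₄ ≥ 0` is inactive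
(`μ = 0`) or active (`ζ̃₄ = 0`). -/
lemma lam_cases {psi c : Fin 4 → ℝ} (hpsi : ∀ i, 0 < psi i) (hc : c 0 ≠ 0) (v : Fin 4 → ℝ) :
    (mu psi c v = 0 ∧ lam psi c v * cPc psi c = cPv psi c v) ∨
      (mu psi c v = lam psi c v * c 3 - v 3 ∧
        lam psi c v * (cPc psi c - c 3 ^ 2 * psi 3) = cPv psi c v - c 3 * v 3 * psi 3) := by
  have hD := cPc_sub_pos hpsi hc
  have hP : 0 < cPc psi c := by nlinarith [mul_nonneg (sq_nonneg (c 3)) (hpsi 3).le]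
  by_cases h : 0 ≤ v 3 - cPv psi c v / cPc psi c * c 3
  · have hl : lam psi c v = cPv psi c v / cPc psi c := if_pos h
    refine Or.inl ⟨?_, by rw [hl]; field_simp⟩
    rw [mu, hl]
    exact max_eq_right (by linarith)
  · have hl : lam psi c v * (cPc psi c - c 3 ^ 2 * psi 3) = cPv psi c v - c 3 * v 3 * psi 3 := by
      rw [lam, if_neg h]
      field_simp
    refine Or.inr ⟨(max_eq_left ?_).trans (by ring), hl⟩
    have hv : v 3 * cPc psi c < cPv psi c v * c 3 := by
      rw [not_le, sub_neg, div_mul_eq_mul_div, lt_div_iff₀ hP] at h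
      exact h
    have : (v 3 - lam psi c v * c 3) * (cPc psi c - c 3 ^ 2 * psi 3) < 0 := by
      linear_combination hv - c 3 * hl
    nlinarith

lemma sum_mul_zetaTilde_eq_zero {psi c : Fin 4 → ℝ} (hpsi : ∀ i, 0 < psi i) (hc : c 0 ≠ 0)
    (v : Fin 4 → ℝ) : ∑ i, c i * zetaTilde psi c v i = 0 := by
  simp only [zetaTilde, e4_eq, Fin.sum_univ_four, Matrix.cons_val]
  rcases lam_cases hpsi hc v with ⟨hm, hl⟩ | ⟨hm, hl⟩ <;>
    simp only [cPc, cPv, Fin.sum_univ_four] at hl <;> linear_combination -hl + c 3 * psi 3 * hm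

lemma mu_mul_zetaTilde_three {psi c : Fin 4 → ℝ} (hpsi : ∀ i, 0 < psi i) (hc : c 0 ≠ 0)
    (v : Fin 4 → ℝ) : mu psi c v * zetaTilde psi c v 3 = 0 := by
  rcases lam_cases hpsi hc v with ⟨hm, -⟩ | ⟨hm, -⟩
  · rw [hm, zero_mul]
  · simp only [zetaTilde, e4_eq, Matrix.cons_val, hm]
    ring

lemma sum_mul_zetaTilde_eq_sum_mul_sq {psi c : Fin 4 → ℝ} (hpsi : ∀ i, 0 < psi i)
    (hc : c 0 ≠ 0) (v : Fin 4 → ℝ) :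
    ∑ i, v i * zetaTilde psi c v i = ∑ i, psi i * lagrangeCost psi c v i ^ 2 := by
  have hc' := sum_mul_zetaTilde_eq_zero hpsi hc v
  have hmu := mu_mul_zetaTilde_three hpsi hc v
  simp only [Fin.sum_univ_four, zetaTilde_eq_mul_lagrangeCost] at hc' hmu ⊢
  simp only [lagrangeCost, e4_eq, Matrix.cons_val] at hc' hmu ⊢
  linear_combination lam psi c v * hc' - hmu

/-- For every `ζ` satisfying the nonlinear drift condition `b^C(ζ) = 0` and `ξ ≥ 0`:
`H₁(ζ) ≥ -(ψ/2) v^⊤ ζ̃ - ½ |λ| ‖M‖_F ‖ζ - ζ⁰(Σ)‖²`. -/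
theorem H1_lower_bound_on_drift_condition
    (Sig : ℝ) (hSig : 0 < Sig) (psi c v : Fin 4 → ℝ)
    (hpsi : ∀ i, 0 < psi i) (hc : c 0 ≠ 0)
    (ψ : ℝ) (hψ : 0 < ψ) :
    ∀ z : Fin 4 → ℝ, bC Sig c z = 0 → 0 ≤ z 3 →
      -(ψ / 2) * (∑ i, v i * zetaTilde psi c v i) -
          (1 / 2) * |lam psi c v| * frobM Sig c *
            enorm (fun i => z i - zeta0 Sig i) ^ 2 ≤
        H1 Sig ψ psi v z := by
  intro z hb hz3
  rw [bC_eq_linear_add_quadratic hSig.ne'] at hb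
  set δ : Fin 4 → ℝ := fun i => z i - zeta0 Sig i with hδ
  have hsplit : H1 Sig ψ psi v z = (1 / (2 * ψ) * ∑ i, δ i ^ 2 / psi i -
      ∑ i, lagrangeCost psi c v i * δ i) - lam psi c v * ∑ i, c i * δ i +
        mu psi c v * z 3 := by
    simp only [H1, hδ, lagrangeCost, e4_eq, zeta0, Fin.sum_univ_four, Matrix.cons_val]
    ring
  have hcoord := neg_mul_sum_le_sum_sq_div_sub_sum_mul hψ hpsi δ (lagrangeCost psi c v)
  have hdrift := neg_abs_mul_frobM_le Sig (lam psi c v) c (z 1 - Sig) (z 2)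
  have hnorm : (z 1 - Sig) ^ 2 + z 2 ^ 2 ≤ enorm δ ^ 2 := by
    simp only [enorm_sq, hδ, zeta0, Fin.sum_univ_four, Matrix.cons_val, sub_zero]
    linarith [sq_nonneg (z 0), sq_nonneg (z 3)]
  have hnorm' := mul_le_mul_of_nonneg_left hnorm
    (mul_nonneg (abs_nonneg (lam psi c v)) (Real.sqrt_nonneg _) : 0 ≤ |lam psi c v| * frobM Sig c)
  have hmu : 0 ≤ mu psi c v * z 3 := mul_nonneg (le_max_right _ _) hz3
  rw [sum_mul_zetaTilde_eq_sum_mul_sq hpsi hc, hsplit]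
  linear_combination hcoord + (1 / 2) * hdrift + (1 / 2) * hnorm' + hmu
    + lam psi c v * hb

end Stmt13
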